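/- Let m be a nonzero ideal of the ring of integers O of a number field K, and let a, b, g, e, f ∈ O satisfy: (g) + m = (a) + (b) + m (g is a greatest common divisor of ā and b̄ in O/m); e·g - a ∈ m and f·g - b ∈ m; N((e) + m)·N((g) + m) = N((a) + m) and N((f) + m)·N((g) + m) = N((b) + m). Then ē and f̄ are coprime in O/m, i.e. (e) + (f) + m = O. -/

import Mathlib

/-!
Write `⟨x⟩` for the ideal `(x) + m`. Since `eg ≡ a` mod `m`, the product `⟨e⟩⟨g⟩` is contained in
`⟨a⟩`, and the norm hypothesis forces equality; likewise `⟨f⟩⟨g⟩ = ⟨b⟩`. Hence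
`(⟨e⟩ + ⟨f⟩)⟨g⟩ = ⟨a⟩ + ⟨b⟩ = ⟨g⟩`, and cancelling the nonzero ideal `⟨g⟩` in the Dedekind domain `O`
gives `⟨e⟩ + ⟨f⟩ = O`.
-/

open NumberField

namespace Ideal

section CommRing

variable {R : Type*} [CommRing R] {m : Ideal R}

theorem span_singleton_sup_le_of_sub_mem {x y : R} (h : x - y ∈ m) :
    span {x} ⊔ m ≤ span {y} ⊔ m := by
  refine sup_le (span_singleton_le_iff_mem _ |>.mpr ?_) le_sup_right
  rw [← sub_add_cancel x y, add_comm]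
  exact add_mem (mem_sup_left (mem_span_singleton_self y)) (mem_sup_right h)

theorem span_singleton_sup_eq_of_sub_mem {x y : R} (h : x - y ∈ m) :
    span {x} ⊔ m = span {y} ⊔ m :=
  le_antisymm (span_singleton_sup_le_of_sub_mem h)
    (span_singleton_sup_le_of_sub_mem (sub_mem_comm_iff.mp h))

theorem span_singleton_sup_mul_le (m : Ideal R) (x y : R) :
    (span {x} ⊔ m) * (span {y} ⊔ m) ≤ span {x * y} ⊔ m := by
  rw [Ideal.sup_mul, Ideal.mul_sup, Ideal.mul_sup, span_singleton_mul_span_singleton]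
  refine sup_le (sup_le le_sup_left ?_) (sup_le ?_ ?_) <;> refine le_trans ?_ le_sup_right
  exacts [Ideal.mul_le_right, Ideal.mul_le_left, Ideal.mul_le_left]

end CommRing

section Dedekind

variable {S : Type*} [CommRing S] [IsDedekindDomain S] [Module.Free ℤ S]
  [Module.Finite ℤ S]

theorem eq_of_le_of_absNorm_eq {I J : Ideal S} (hIJ : I ≤ J) (h : absNorm I = absNorm J) :
    I = J := by
  rcases eq_or_ne I ⊥ with rfl | hI
  · exact (absNorm_eq_zero_iff.mp (h.symm.trans absNorm_bot)).symm
  obtain ⟨C, rfl⟩ := dvd_iff_le.mpr hIJ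
  have hJ : absNorm J ≠ 0 := fun h0 => hI (by simp [absNorm_eq_zero_iff.mp h0])
  rw [map_mul, mul_eq_left₀ hJ, absNorm_eq_one_iff] at h
  rw [h, mul_top]

theorem span_singleton_sup_mul_eq_of_absNorm_eq {m : Ideal S} {a e g : S} (h : e * g - a ∈ m)
    (hnorm : absNorm (span {e} ⊔ m) * absNorm (span {g} ⊔ m) = absNorm (span {a} ⊔ m)) :
    (span {e} ⊔ m) * (span {g} ⊔ m) = span {a} ⊔ m :=
  eq_of_le_of_absNorm_eq
    ((span_singleton_sup_mul_le m e g).trans (span_singleton_sup_eq_of_sub_mem h).le)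
    ((map_mul absNorm _ _).trans hnorm)

end Dedekind

end Ideal

open Ideal in
theorem stmt_11 (K : Type*) [Field K] [NumberField K]
    (m : Ideal (RingOfIntegers K)) (hm : m ≠ ⊥)
    (a b g e f : RingOfIntegers K)
    (hg : Ideal.span {g} ⊔ m = Ideal.span {a} ⊔ Ideal.span {b} ⊔ m)
    (he : e * g - a ∈ m) (hf : f * g - b ∈ m)
    (hEnorm : Ideal.absNorm (Ideal.span {e} ⊔ m) * Ideal.absNorm (Ideal.span {g} ⊔ m) =
        Ideal.absNorm (Ideal.span {a} ⊔ m))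
    (hFnorm : Ideal.absNorm (Ideal.span {f} ⊔ m) * Ideal.absNorm (Ideal.span {g} ⊔ m) =
        Ideal.absNorm (Ideal.span {b} ⊔ m)) :
    Ideal.span {e} ⊔ Ideal.span {f} ⊔ m = ⊤ := by
  have hg0 : span {g} ⊔ m ≠ ⊥ := fun h => hm (eq_bot_iff.mpr (h ▸ le_sup_right))
  refine mul_right_cancel₀ hg0 ?_
  calc (span {e} ⊔ span {f} ⊔ m) * (span {g} ⊔ m)
      = (span {e} ⊔ m) * (span {g} ⊔ m) ⊔ (span {f} ⊔ m) * (span {g} ⊔ m) := by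
        rw [← Ideal.sup_mul, sup_sup_sup_comm, sup_idem, sup_assoc]
    _ = span {a} ⊔ span {b} ⊔ m := by
        rw [span_singleton_sup_mul_eq_of_absNorm_eq he hEnorm,
          span_singleton_sup_mul_eq_of_absNorm_eq hf hFnorm, sup_sup_sup_comm, sup_idem]
    _ = ⊤ * (span {g} ⊔ m) := by rw [top_mul, hg]
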